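/- Let X ~ N(μ, σ²·I) in ℝ^l with σ > 0, let o be a unit vector, and let m ∈ ℝ^l. Then the probability that oᵀX − oᵀm ≤ 0 equals Φ((oᵀm − oᵀμ)/σ), where Φ is the standard normal CDF. In particular, if o = (μ₁−μ₂)/‖μ₁−μ₂‖₂, m = (μ₁+μ₂)/2, and μ = (pμ₁+qμ₂)/(p+q) with p > q > 0 and μ₁ ≠ μ₂, this misclassification probability equals Φ(−((p−q)/(p+q))·‖μ₁−μ₂‖₂/(2σ)). -/

import Mathlib

open MeasureTheory ProbabilityTheory

/-- Standard normal CDF. -/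
noncomputable def stdNormalCDF (x : ℝ) : ℝ :=
  ProbabilityTheory.cdf (ProbabilityTheory.gaussianReal 0 1) x

section Aux

open Real Set
open scoped NNReal ENNReal

lemma pdf_mul_pdf (m₁ m₂ : ℝ) (v₁ v₂ : ℝ≥0) (h₁ : v₁ ≠ 0) (h₂ : v₂ ≠ 0) (y x : ℝ) :
    gaussianPDFReal m₁ v₁ x * gaussianPDFReal m₂ v₂ (y - x) =
      gaussianPDFReal (m₁ + m₂) (v₁ + v₂) y *
        gaussianPDFReal (m₁ + v₁ * (y - m₁ - m₂) / (v₁ + v₂)) (v₁ * v₂ / (v₁ + v₂)) x := by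
  have ha : (0:ℝ) < v₁ := by positivity
  have hb : (0:ℝ) < v₂ := by positivity
  have hab : (0:ℝ) < (v₁:ℝ) + v₂ := by linarith
  have hpi : (0:ℝ) < π := Real.pi_pos
  simp only [gaussianPDFReal, NNReal.coe_add, NNReal.coe_div, NNReal.coe_mul]
  rw [mul_mul_mul_comm]
  conv_rhs => rw [mul_mul_mul_comm]
  rw [← mul_inv, ← mul_inv, ← Real.sqrt_mul (by positivity), ← Real.sqrt_mul (by positivity),
    ← Real.exp_add, ← Real.exp_add]
  congr 2
  · congr 1
    field_simp
  · field_simp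
    ring
lemma lintegral_pdf_conv (m₁ m₂ : ℝ) (v₁ v₂ : ℝ≥0) (h₁ : v₁ ≠ 0) (h₂ : v₂ ≠ 0) (y : ℝ) :
    ∫⁻ x, gaussianPDF m₁ v₁ x * gaussianPDF m₂ v₂ (y - x) =
      gaussianPDF (m₁ + m₂) (v₁ + v₂) y := by
  have hw : v₁ * v₂ / (v₁ + v₂) ≠ 0 := by
    simp [div_eq_mul_inv, h₁, h₂, mul_eq_zero]
  simp only [gaussianPDF]
  calc ∫⁻ x, ENNReal.ofReal (gaussianPDFReal m₁ v₁ x) *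
        ENNReal.ofReal (gaussianPDFReal m₂ v₂ (y - x))
      = ∫⁻ x, ENNReal.ofReal (gaussianPDFReal (m₁ + m₂) (v₁ + v₂) y) *
          ENNReal.ofReal (gaussianPDFReal (m₁ + v₁ * (y - m₁ - m₂) / (v₁ + v₂))
            (v₁ * v₂ / (v₁ + v₂)) x) := by
        congr 1 with x
        rw [← ENNReal.ofReal_mul (gaussianPDFReal_nonneg _ _ _),
          ← ENNReal.ofReal_mul (gaussianPDFReal_nonneg _ _ _),
          pdf_mul_pdf m₁ m₂ v₁ v₂ h₁ h₂ y x]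
    _ = ENNReal.ofReal (gaussianPDFReal (m₁ + m₂) (v₁ + v₂) y) := by
        rw [lintegral_const_mul _ ((measurable_gaussianPDFReal _ _).ennreal_ofReal),
          lintegral_gaussianPDFReal_eq_one _ hw, mul_one]
lemma gaussianReal_conv (m₁ m₂ : ℝ) (v₁ v₂ : ℝ≥0) :
    Measure.map (fun p : ℝ × ℝ => p.1 + p.2)
      ((gaussianReal m₁ v₁).prod (gaussianReal m₂ v₂)) = gaussianReal (m₁ + m₂) (v₁ + v₂) := by
  by_cases h₁ : v₁ = 0
  · subst h₁
    rw [gaussianReal_zero_var, Measure.dirac_prod,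
      Measure.map_map measurable_add (measurable_prodMk_left)]
    have : ((fun p : ℝ × ℝ => p.1 + p.2) ∘ Prod.mk m₁) = (m₁ + ·) := rfl
    rw [this, gaussianReal_map_const_add, zero_add, add_comm m₂ m₁]
  by_cases h₂ : v₂ = 0
  · subst h₂
    rw [gaussianReal_zero_var, Measure.prod_dirac,
      Measure.map_map measurable_add (measurable_prodMk_right)]
    have : ((fun p : ℝ × ℝ => p.1 + p.2) ∘ (fun x => (x, m₂))) = (· + m₂) := rfl
    rw [this, gaussianReal_map_add_const, add_zero]
  -- main case
  have hmeas₂ : Measurable fun p : ℝ × ℝ => gaussianPDF m₂ v₂ (p.2 - p.1) :=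
    (measurable_gaussianPDF m₂ v₂).comp (measurable_snd.sub measurable_fst)
  ext s hs
  have hindm : Measurable (s.indicator (fun _ => (1:ℝ≥0∞))) :=
    (measurable_indicator_const_iff 1).mpr hs
  have huncurry : Measurable (Function.uncurry fun x y =>
      s.indicator (fun _ => (1:ℝ≥0∞)) y * gaussianPDF m₂ v₂ (y - x)) :=
    (hindm.comp measurable_snd).mul hmeas₂
  rw [Measure.map_apply measurable_add hs,
    Measure.prod_apply (measurable_add hs)]
  have key : ∀ x : ℝ, (gaussianReal m₂ v₂) (Prod.mk x ⁻¹' ((fun p : ℝ × ℝ => p.1 + p.2) ⁻¹' s))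
      = ∫⁻ y, s.indicator (fun _ => (1:ℝ≥0∞)) y * gaussianPDF m₂ v₂ (y - x) := by
    intro x
    have hpre : (Prod.mk x ⁻¹' ((fun p : ℝ × ℝ => p.1 + p.2) ⁻¹' s)) = (fun y => x + y) ⁻¹' s := rfl
    rw [hpre, ← Measure.map_apply (measurable_const_add x) hs, gaussianReal_map_const_add,
      gaussianReal_apply _ h₂, ← lintegral_indicator hs]
    congr 1 with y
    rw [show gaussianPDF m₂ v₂ (y - x) = gaussianPDF (m₂ + x) v₂ y from by
      rw [gaussianPDF, gaussianPDF, gaussianPDFReal_sub y x]]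
    by_cases hy : y ∈ s <;> simp [hy]
  simp_rw [key]
  have hg : Measurable fun x : ℝ =>
      ∫⁻ y, s.indicator (fun _ => (1:ℝ≥0∞)) y * gaussianPDF m₂ v₂ (y - x) :=
    huncurry.lintegral_prod_right'
  rw [gaussianReal_of_var_ne_zero _ h₁,
    lintegral_withDensity_eq_lintegral_mul _ (measurable_gaussianPDF m₁ v₁) hg]
  calc ∫⁻ x, gaussianPDF m₁ v₁ x * ∫⁻ y, s.indicator (fun _ => (1:ℝ≥0∞)) y *
        gaussianPDF m₂ v₂ (y - x)
      = ∫⁻ x, ∫⁻ y, s.indicator (fun _ => (1:ℝ≥0∞)) y *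
          (gaussianPDF m₁ v₁ x * gaussianPDF m₂ v₂ (y - x)) := by
        congr 1 with x
        rw [← lintegral_const_mul _ (by exact (hindm.mul ((measurable_gaussianPDF m₂ v₂).comp'
          (measurable_id'.sub_const x))) : Measurable fun y =>
            s.indicator (fun _ => (1:ℝ≥0∞)) y * gaussianPDF m₂ v₂ (y - x))]
        congr 1 with y
        ring
    _ = ∫⁻ y, ∫⁻ x, s.indicator (fun _ => (1:ℝ≥0∞)) y *
          (gaussianPDF m₁ v₁ x * gaussianPDF m₂ v₂ (y - x)) := by
        apply lintegral_lintegral_swap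
        exact ((hindm.comp measurable_snd).mul (((measurable_gaussianPDF m₁ v₁).comp
          measurable_fst).mul hmeas₂)).aemeasurable
    _ = ∫⁻ y, s.indicator (fun _ => (1:ℝ≥0∞)) y * gaussianPDF (m₁ + m₂) (v₁ + v₂) y := by
        congr 1 with y
        rw [lintegral_const_mul _ (by exact ((measurable_gaussianPDF m₁ v₁).mul
          ((measurable_gaussianPDF m₂ v₂).comp' (measurable_const.sub measurable_id'))) :
            Measurable fun x => gaussianPDF m₁ v₁ x * gaussianPDF m₂ v₂ (y - x)),
          lintegral_pdf_conv m₁ m₂ v₁ v₂ h₁ h₂ y]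
    _ = gaussianReal (m₁ + m₂) (v₁ + v₂) s := by
        rw [gaussianReal_apply _ (by simp [h₁] : v₁ + v₂ ≠ 0), ← lintegral_indicator hs]
        congr 1 with y
        by_cases hy : y ∈ s <;> simp [hy]
lemma sq_toNNReal (c : ℝ) : (⟨c ^ 2, sq_nonneg c⟩ : ℝ≥0) = (c ^ 2).toNNReal := by
  ext
  simp [Real.coe_toNNReal _ (sq_nonneg c)]

lemma map_sum_pi_gaussian : ∀ (n : ℕ) (o μ : Fin n → ℝ) (v : ℝ≥0),
    Measure.map (fun x : Fin n → ℝ => ∑ i, o i * x i)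
      (Measure.pi fun i => gaussianReal (μ i) v)
    = gaussianReal (∑ i, o i * μ i) (∑ i, (o i ^ 2).toNNReal * v) := by
  intro n
  induction n with
  | zero =>
    intro o μ v
    simp only [Finset.univ_eq_empty, Finset.sum_empty]
    rw [show (fun x : Fin 0 → ℝ => (0:ℝ)) = fun _ => 0 from rfl, Measure.map_const,
      measure_univ, one_smul, ← gaussianReal_zero_var]
  | succ n ih =>
    intro o μ v
    have hmp := (measurePreserving_piFinSuccAbove (fun i : Fin (n+1) => gaussianReal (μ i) v) 0)
    have hmul : Measurable (o 0 * ·) := measurable_id'.const_mul _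
    have hsumn : Measurable fun x : Fin n → ℝ => ∑ j, o j.succ * x j :=
      Finset.measurable_sum _ fun i _ => (measurable_pi_apply i).const_mul _
    have he : (fun x : Fin (n+1) → ℝ => ∑ i, o i * x i) =
        ((fun p : ℝ × ℝ => p.1 + p.2) ∘ (Prod.map (o 0 * ·)
          (fun x : Fin n → ℝ => ∑ j, o j.succ * x j))) ∘
          (MeasurableEquiv.piFinSuccAbove (fun _ => ℝ) 0) := by
      funext x
      simp only [Function.comp_apply, MeasurableEquiv.piFinSuccAbove_apply, Prod.map_apply]
      rw [Fin.sum_univ_succ]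
      congr 1
    rw [he, ← Measure.map_map (measurable_add.comp (hmul.prodMap hsumn))
        (MeasurableEquiv.piFinSuccAbove (fun _ => ℝ) 0).measurable,
      hmp.map_eq,
      ← Measure.map_map measurable_add (hmul.prodMap hsumn),
      ← Measure.map_prod_map _ _ hmul hsumn,
      show (fun j : Fin n => gaussianReal (μ (Fin.succAbove 0 j)) v)
        = fun j : Fin n => gaussianReal (μ j.succ) v from by
        funext j; rw [Fin.zero_succAbove],
      gaussianReal_map_const_mul, ih (fun j => o j.succ) (fun j => μ j.succ) v,
      gaussianReal_conv, Fin.sum_univ_succ (f := fun i => o i * μ i),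
      Fin.sum_univ_succ (f := fun i => (o i ^ 2).toNNReal * v),
      show NNReal.mk (o 0 ^ 2) (sq_nonneg _) = (o 0 ^ 2).toNNReal from sq_toNNReal (o 0)]
lemma gaussianReal_Iic (a c σ : ℝ) (hσ : 0 < σ) :
    gaussianReal a ⟨σ ^ 2, sq_nonneg σ⟩ (Set.Iic c)
      = ENNReal.ofReal (stdNormalCDF ((c - a) / σ)) := by
  have h1 : gaussianReal a ⟨σ ^ 2, sq_nonneg σ⟩
      = Measure.map (fun x => σ * x + a) (gaussianReal 0 1) := by
    have : (fun x : ℝ => σ * x + a) = (· + a) ∘ (σ * ·) := rfl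
    rw [this, ← Measure.map_map (measurable_add_const a) (measurable_id'.const_mul σ),
      gaussianReal_map_const_mul, gaussianReal_map_add_const, mul_zero, zero_add, mul_one]
    rfl
  have h2 : (fun x : ℝ => σ * x + a) ⁻¹' Set.Iic c = Set.Iic ((c - a) / σ) := by
    ext x
    simp only [Set.mem_preimage, Set.mem_Iic]
    rw [le_div_iff₀ hσ]
    constructor <;> intro h <;> nlinarith
  rw [h1, Measure.map_apply ((measurable_id'.const_mul σ).add_const a) measurableSet_Iic, h2,
    stdNormalCDF, ofReal_cdf]

end Aux

open scoped NNReal in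
/-- For X ~ N(μ, σ²I) in ℝ^l, a unit vector o and a point m, the probability
that oᵀX − oᵀm ≤ 0 equals Φ((oᵀm − oᵀμ)/σ); in particular, for the fixed
midpoint classifier and the homophilic CSBM class-1 mean, the misclassification
probability equals Φ(−((p−q)/(p+q))·‖μ₁−μ₂‖/(2σ)). -/
theorem gaussian_halfspace_misclassification (l : ℕ) (σ : ℝ) (hσ : 0 < σ) :
    (∀ o m μ : Fin l → ℝ, (∑ i, o i ^ 2) = 1 →
      (Measure.pi fun i => gaussianReal (μ i) ⟨σ ^ 2, sq_nonneg σ⟩)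
        {x | (∑ i, o i * x i) - (∑ i, o i * m i) ≤ 0} =
        ENNReal.ofReal (stdNormalCDF (((∑ i, o i * m i) - (∑ i, o i * μ i)) / σ))) ∧
    (∀ (p q : ℝ) (μ₁ μ₂ : Fin l → ℝ), 0 < q → q < p → μ₁ ≠ μ₂ →
      (Measure.pi fun i =>
          gaussianReal ((p * μ₁ i + q * μ₂ i) / (p + q)) ⟨σ ^ 2, sq_nonneg σ⟩)
        {x | (∑ i, (μ₁ i - μ₂ i) / Real.sqrt (∑ j, (μ₁ j - μ₂ j) ^ 2) * x i) -
             (∑ i, (μ₁ i - μ₂ i) / Real.sqrt (∑ j, (μ₁ j - μ₂ j) ^ 2) *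
               ((μ₁ i + μ₂ i) / 2)) ≤ 0} =
        ENNReal.ofReal (stdNormalCDF
          (-(((p - q) / (p + q)) * Real.sqrt (∑ j, (μ₁ j - μ₂ j) ^ 2) / (2 * σ))))) := by
  have part1 : ∀ o m μ : Fin l → ℝ, (∑ i, o i ^ 2) = 1 →
      (Measure.pi fun i => gaussianReal (μ i) ⟨σ ^ 2, sq_nonneg σ⟩)
        {x | (∑ i, o i * x i) - (∑ i, o i * m i) ≤ 0} =
        ENNReal.ofReal (stdNormalCDF (((∑ i, o i * m i) - (∑ i, o i * μ i)) / σ)) := by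
    intro o m μ ho
    have hsum : Measurable fun x : Fin l → ℝ => ∑ i, o i * x i :=
      Finset.measurable_sum _ fun i _ => (measurable_pi_apply i).const_mul _
    have hset : {x : Fin l → ℝ | (∑ i, o i * x i) - (∑ i, o i * m i) ≤ 0}
        = (fun x : Fin l → ℝ => ∑ i, o i * x i) ⁻¹' Set.Iic (∑ i, o i * m i) := by
      ext x
      simp [sub_nonpos]
    have hvar : (∑ i : Fin l, (o i ^ 2).toNNReal * (σ ^ 2).toNNReal)
        = (σ ^ 2).toNNReal := by
      refine NNReal.coe_injective ?_
      push_cast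
      simp only [Real.coe_toNNReal _ (sq_nonneg _)]
      rw [← Finset.sum_mul, ho, one_mul]
    rw [hset, ← Measure.map_apply hsum measurableSet_Iic, sq_toNNReal σ, map_sum_pi_gaussian,
      hvar, ← sq_toNNReal σ, gaussianReal_Iic _ _ _ hσ]
  refine ⟨part1, ?_⟩
  intro p q μ₁ μ₂ hq hpq hne
  set S : ℝ := ∑ j, (μ₁ j - μ₂ j) ^ 2 with hSdef
  have hS : 0 < S := by
    obtain ⟨j, hj⟩ := Function.ne_iff.mp hne
    refine Finset.sum_pos' (fun i _ => sq_nonneg _) ⟨j, Finset.mem_univ j, ?_⟩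
    have : μ₁ j - μ₂ j ≠ 0 := sub_ne_zero_of_ne hj
    positivity
  have hsqrt : 0 < Real.sqrt S := Real.sqrt_pos.mpr hS
  have hpq0 : p + q ≠ 0 := ne_of_gt (by linarith)
  have ho : (∑ i, ((μ₁ i - μ₂ i) / Real.sqrt S) ^ 2) = 1 := by
    simp_rw [div_pow, Real.sq_sqrt hS.le]
    rw [← Finset.sum_div, div_self hS.ne']
  have h1 := part1 (fun i => (μ₁ i - μ₂ i) / Real.sqrt S)
    (fun i => (μ₁ i + μ₂ i) / 2) (fun i => (p * μ₁ i + q * μ₂ i) / (p + q)) ho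
  rw [h1]
  congr 2
  have hsub : ∀ i : Fin l, (μ₁ i + μ₂ i) / 2 - (p * μ₁ i + q * μ₂ i) / (p + q)
      = -((p - q) / (2 * (p + q))) * (μ₁ i - μ₂ i) := by
    intro i
    field_simp
    ring
  rw [← Finset.sum_sub_distrib]
  have : ∀ i : Fin l, (μ₁ i - μ₂ i) / Real.sqrt S * ((μ₁ i + μ₂ i) / 2)
      - (μ₁ i - μ₂ i) / Real.sqrt S * ((p * μ₁ i + q * μ₂ i) / (p + q))
      = -((p - q) / (2 * (p + q))) / Real.sqrt S * (μ₁ i - μ₂ i) ^ 2 := by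
    intro i
    rw [← mul_sub, hsub i]
    ring
  rw [Finset.sum_congr rfl fun i _ => this i, ← Finset.mul_sum, ← hSdef]
  have hss : Real.sqrt S * Real.sqrt S = S := Real.mul_self_sqrt hS.le
  field_simp
  linear_combination (p - q) * hss
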